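/- For bond percolation, the derivative identity (1−p)·∂M/∂p = Σ_{x∼y} P_{p,γ}(x ∈ C(0), C(0) ∩ G = ∅, C(y) ∩ G ≠ ∅) holds, where the sum is over ordered pairs of adjacent vertices and M(p,γ) is the magnetization P_{p,γ}(0 ↔ G). -/

import Mathlib

open Classical

noncomputable section

/-- Two vertices are joined by an edge of `G` that is open in the configuration `ω`. -/
def OpenAdj {V : Type*} (G : SimpleGraph V) (ω : Sym2 V → Bool) (x y : V) : Prop :=
  G.Adj x y ∧ ω s(x, y) = true

/-- `x` and `y` are connected by an open path with at most `r` edges. -/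
def ConnWithin {V : Type*} (G : SimpleGraph V) (ω : Sym2 V → Bool) (x y : V) (r : ℕ) : Prop :=
  ∃ l : List V, List.Chain (OpenAdj G ω) x l ∧
    (x :: l).getLast (List.cons_ne_nil x l) = y ∧ l.length ≤ r

/-- The intrinsic (open-path) distance from `x` to `y` equals `r`. -/
def DistEq {V : Type*} (G : SimpleGraph V) (ω : Sym2 V → Bool) (x y : V) (r : ℕ) : Prop :=
  ConnWithin G ω x y r ∧ ∀ s < r, ¬ ConnWithin G ω x y s

/-- The boundary `∂B_x(r)` of the intrinsic ball of radius `r` around `x` is nonempty. -/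
def SphereNonempty {V : Type*} (G : SimpleGraph V) (ω : Sym2 V → Bool) (x : V) (r : ℕ) : Prop :=
  ∃ y, DistEq G ω x y r

/-- The Bernoulli product weight of a single percolation configuration. -/
def edgeWeight {V : Type*} [Fintype V] [DecidableEq V] (p : ℝ) (ω : Sym2 V → Bool) : ℝ :=
  ∏ e : Sym2 V, if ω e then p else 1 - p

/-- The probability of the event `S` under bond percolation with parameter `p`. -/
def percProb {V : Type*} [Fintype V] [DecidableEq V] (p : ℝ) (S : Set (Sym2 V → Bool)) : ℝ :=
  ∑ ω : Sym2 V → Bool, if ω ∈ S then edgeWeight p ω else 0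

/-- Expectation under bond percolation with parameter `p`. -/
def percExp {V : Type*} [Fintype V] [DecidableEq V] (p : ℝ) (f : (Sym2 V → Bool) → ℝ) : ℝ :=
  ∑ ω : Sym2 V → Bool, edgeWeight p ω * f ω

/-- `x` and `y` are connected by an open path. -/
def Conn {V : Type*} (G : SimpleGraph V) (ω : Sym2 V → Bool) (x y : V) : Prop :=
  Relation.ReflTransGen (OpenAdj G ω) x y

/-- The Bernoulli product weight of a green-vertex configuration. -/
def siteWeight {V : Type*} [Fintype V] (γ : ℝ) (g : V → Bool) : ℝ :=
  ∏ v : V, if g v then γ else 1 - γ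

/-- Probability in the joint bond/site model: bonds open with probability `p`,
vertices green with probability `γ`, all independently. -/
def jointProb {V : Type*} [Fintype V] [DecidableEq V] (p γ : ℝ)
    (S : Set ((Sym2 V → Bool) × (V → Bool))) : ℝ :=
  ∑ c : (Sym2 V → Bool) × (V → Bool),
    if c ∈ S then edgeWeight p c.1 * siteWeight γ c.2 else 0

/-! Russo's formula for a finite product of Bernoulli(`p`) bonds reads
`(1 - p) d/dp E_p[F] = ∑_e E_p[F(ω^e) - F(ω)]`, where `ω^e` opens `e`: differentiating the
product weight in the factor of `e` and pairing `ω` with `ω^e` turns the derivative into a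
difference. Take for `F(ω)` the probability, over the green vertices, that `C(x₀)` reaches a green
vertex. Opening the bond `{x, y}` creates such a connection exactly when one endpoint lies in the
green-free cluster `C(x₀)` and the other one reaches a green vertex; at most one orientation of the
bond can be of this kind, so the sum over unordered bonds becomes the sum over ordered pairs. -/

section Russo

variable {E : Type*} [Fintype E] [DecidableEq E]

def bernoulliWeight (p : ℝ) (ω : E → Bool) : ℝ :=
  ∏ e, if ω e then p else 1 - p

theorem Fintype.sum_eq_sum_filter_add_update {M : Type*} [AddCommMonoid M] (e : E)
    (h : (E → Bool) → M) :
    ∑ ω, h ω = ∑ ω with ω e = false, (h ω + h (Function.update ω e true)) := by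
  rw [Finset.sum_add_distrib,
    ← Finset.sum_filter_add_sum_filter_not Finset.univ (fun ω => ω e = false)]
  congr 1
  refine (Finset.sum_nbij' (fun ω : E → Bool => Function.update ω e true)
    (fun ω => Function.update ω e false) ?_ ?_ ?_ ?_ fun _ _ => rfl).symm <;> intro ω hω <;>
    simp_all [Function.update_idem, Function.update_eq_self_iff]

theorem prod_erase_ite_update (p : ℝ) (ω : E → Bool) (e : E) (b : Bool) :
    ∏ e' ∈ Finset.univ.erase e, (if Function.update ω e b e' then p else 1 - p) =
      ∏ e' ∈ Finset.univ.erase e, (if ω e' then p else 1 - p) :=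
  Finset.prod_congr rfl fun _ he' => by rw [Function.update_of_ne (Finset.ne_of_mem_erase he')]

theorem bernoulliWeight_eq_mul_prod_erase (p : ℝ) (ω : E → Bool) (e : E) :
    bernoulliWeight p ω =
      (if ω e then p else 1 - p) * ∏ e' ∈ Finset.univ.erase e, (if ω e' then p else 1 - p) :=
  (Finset.mul_prod_erase _ _ (Finset.mem_univ e)).symm

theorem hasDerivAt_bernoulliWeight (p : ℝ) (ω : E → Bool) :
    HasDerivAt (bernoulliWeight · ω)
      (∑ e, (∏ e' ∈ Finset.univ.erase e, (if ω e' then p else 1 - p)) *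
        if ω e then 1 else -1) p := by
  refine HasDerivAt.fun_finsetProd fun e _ => ?_
  cases ω e
  · simpa using (hasDerivAt_id' p).const_sub 1
  · simpa using hasDerivAt_id' p

theorem one_sub_mul_sum_partialDeriv_eq (F : (E → Bool) → ℝ) (p : ℝ) (e : E) :
    (1 - p) * ∑ ω, (∏ e' ∈ Finset.univ.erase e, (if ω e' then p else 1 - p)) *
        (if ω e then 1 else -1) * F ω =
      ∑ ω, bernoulliWeight p ω * (F (Function.update ω e true) - F ω) := by
  rw [Finset.mul_sum, Fintype.sum_eq_sum_filter_add_update e,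
    Fintype.sum_eq_sum_filter_add_update e]
  refine Finset.sum_congr rfl fun ω hω => ?_
  simp only [prod_erase_ite_update, bernoulliWeight_eq_mul_prod_erase p ω e, Function.update_idem,
    Function.update_self, (Finset.mem_filter.mp hω).2, Bool.false_eq_true, ↓reduceIte, sub_self,
    mul_zero, add_zero]
  ring

theorem russo_formula (F : (E → Bool) → ℝ) (p : ℝ) :
    (1 - p) * deriv (fun q => ∑ ω, bernoulliWeight q ω * F ω) p =
      ∑ e, ∑ ω, bernoulliWeight p ω * (F (Function.update ω e true) - F ω) := by
  rw [(HasDerivAt.fun_sum fun ω _ => (hasDerivAt_bernoulliWeight p ω).mul_const (F ω)).deriv]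
  simp only [Finset.sum_mul]
  rw [Finset.sum_comm, Finset.mul_sum]
  exact Finset.sum_congr rfl fun e _ => one_sub_mul_sum_partialDeriv_eq F p e

end Russo

section Connectivity

variable {V : Type*} {G : SimpleGraph V} {ω ω' : Sym2 V → Bool} {a b x y : V}

theorem Conn.mono (h : ∀ e, ω e = true → ω' e = true) (hab : Conn G ω a b) : Conn G ω' a b :=
  Relation.ReflTransGen.mono (fun _ _ huv => ⟨huv.1, h _ huv.2⟩) _ _ hab

variable [DecidableEq V]

theorem conn_update_of_notMem_edgeSet {e : Sym2 V} (he : e ∉ G.edgeSet) (t : Bool) :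
    Conn G (Function.update ω e t) a b ↔ Conn G ω a b := by
  have hopen : OpenAdj G (Function.update ω e t) = OpenAdj G ω := by
    ext u v
    refine and_congr_right fun huv => ?_
    rw [Function.update_of_ne (ne_of_mem_of_not_mem (G.mem_edgeSet.mpr huv) he)]
  rw [Conn, hopen, Conn]

theorem Conn.update_true (hab : Conn G ω a b) (e : Sym2 V) :
    Conn G (Function.update ω e true) a b :=
  hab.mono fun e' he' => by
    rcases eq_or_ne e' e with rfl | hne
    · exact Function.update_self ..
    · rwa [Function.update_of_ne hne]

theorem conn_update_of_conn_of_conn (hxy : G.Adj x y) (hax : Conn G ω a x) (hyb : Conn G ω y b) :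
    Conn G (Function.update ω s(x, y) true) a b :=
  ((hax.update_true _).tail ⟨hxy, Function.update_self ..⟩).trans (hyb.update_true _)

theorem Conn.of_update_true (h : Conn G (Function.update ω s(x, y) true) a b) :
    Conn G ω a b ∨ ((Conn G ω a x ∨ Conn G ω a y) ∧ (Conn G ω x b ∨ Conn G ω y b)) := by
  induction h with
  | refl => exact Or.inl .refl
  | @tail c d _ hcd ih =>
    by_cases hopen : ω s(c, d) = true
    · have step : OpenAdj G ω c d := ⟨hcd.1, hopen⟩
      exact ih.imp (·.tail step) (And.imp_right (Or.imp (·.tail step) (·.tail step)))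
    · have hedge : s(c, d) = s(x, y) := by
        by_contra hne
        exact hopen (by simpa [Function.update_of_ne hne] using hcd.2)
      rcases Sym2.eq_iff.mp hedge with ⟨rfl, rfl⟩ | ⟨rfl, rfl⟩
      · exact Or.inr ⟨ih.elim Or.inl And.left, Or.inr .refl⟩
      · exact Or.inr ⟨ih.elim Or.inr And.left, Or.inl .refl⟩

end Connectivity

section Green

variable {V : Type*} {G : SimpleGraph V} {ω : Sym2 V → Bool} {g : V → Bool} {x₀ x y : V}

def ReachesGreen (G : SimpleGraph V) (ω : Sym2 V → Bool) (g : V → Bool) (x : V) : Prop :=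
  ∃ z, Conn G ω x z ∧ g z = true

/-- Together with `G.Adj a b`, this says that the bond from `a` to `b` is pivotal for
`x₀ ↔ green`: `a ∈ C(x₀)`, `C(x₀)` is green-free and `C(b)` is not. -/
def IsPivotal (G : SimpleGraph V) (ω : Sym2 V → Bool) (g : V → Bool) (x₀ a b : V) : Prop :=
  Conn G ω x₀ a ∧ (∀ z, Conn G ω x₀ z → g z = false) ∧ ReachesGreen G ω g b

theorem not_reachesGreen_iff : ¬ReachesGreen G ω g x₀ ↔ ∀ z, Conn G ω x₀ z → g z = false := by
  simp [ReachesGreen]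

theorem IsPivotal.not_swap (h : IsPivotal G ω g x₀ x y) : ¬IsPivotal G ω g x₀ y x := by
  rintro ⟨hy, -, -⟩
  obtain ⟨-, hfree, z, hyz, hz⟩ := h
  simp [hfree z (hy.trans hyz)] at hz

variable [DecidableEq V]

theorem ReachesGreen.update_true (h : ReachesGreen G ω g x₀) (e : Sym2 V) :
    ReachesGreen G (Function.update ω e true) g x₀ :=
  let ⟨z, hz, hgz⟩ := h
  ⟨z, hz.update_true e, hgz⟩

theorem reachesGreen_update_notMem_edgeSet {e : Sym2 V} (he : e ∉ G.edgeSet) :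
    ReachesGreen G (Function.update ω e true) g x₀ ↔ ReachesGreen G ω g x₀ := by
  simp only [ReachesGreen, conn_update_of_notMem_edgeSet he]

theorem reachesGreen_update_and_not_iff (hxy : G.Adj x y) :
    ReachesGreen G (Function.update ω s(x, y) true) g x₀ ∧ ¬ReachesGreen G ω g x₀ ↔
      IsPivotal G ω g x₀ x y ∨ IsPivotal G ω g x₀ y x := by
  rw [not_reachesGreen_iff]
  constructor
  · rintro ⟨⟨z, hz, hgz⟩, hfree⟩
    have hnz : ¬Conn G ω x₀ z := fun h => by simp [hfree z h] at hgz
    rcases hz.of_update_true with h | ⟨hx | hy, hxz | hyz⟩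
    · exact absurd h hnz
    · exact absurd (hx.trans hxz) hnz
    · exact Or.inl ⟨hx, hfree, z, hyz, hgz⟩
    · exact Or.inr ⟨hy, hfree, z, hxz, hgz⟩
    · exact absurd (hy.trans hyz) hnz
  · rintro (⟨hx, hfree, z, hyz, hgz⟩ | ⟨hy, hfree, z, hxz, hgz⟩)
    · exact ⟨⟨z, conn_update_of_conn_of_conn hxy hx hyz, hgz⟩, hfree⟩
    · refine ⟨⟨z, ?_, hgz⟩, hfree⟩
      rw [Sym2.eq_swap]
      exact conn_update_of_conn_of_conn hxy.symm hy hxz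

end Green

section Magnetization

variable {V : Type*} [Fintype V] [DecidableEq V] {G : SimpleGraph V}

theorem ite_reachesGreen_update_sub (e : Sym2 V) (ω : Sym2 V → Bool) (g : V → Bool) (x₀ : V)
    (r : ℝ) :
    ((if ReachesGreen G (Function.update ω e true) g x₀ then r else 0) -
        if ReachesGreen G ω g x₀ then r else 0) =
      ∑ ab : V × V with s(ab.1, ab.2) = e,
        if G.Adj ab.1 ab.2 ∧ IsPivotal G ω g x₀ ab.1 ab.2 then r else 0 := by
  by_cases he : e ∈ G.edgeSet
  · induction e using Sym2.ind with | _ x y =>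
    have hxy : G.Adj x y := he
    have hfiber : ({ab : V × V | s(ab.1, ab.2) = s(x, y)} : Finset (V × V)) = {(x, y), (y, x)} := by
      ext ⟨a, b⟩
      simp
    rw [hfiber, Finset.sum_pair (by simp [hxy.ne])]
    simp only [hxy, hxy.symm, true_and]
    have hmono := fun h : ReachesGreen G ω g x₀ => h.update_true s(x, y)
    have hiff := reachesGreen_update_and_not_iff (ω := ω) (g := g) (x₀ := x₀) hxy
    have hdisj := IsPivotal.not_swap (G := G) (ω := ω) (g := g) (x₀ := x₀) (x := x) (y := y)
    split_ifs <;> first | ring1 | tauto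
  · rw [reachesGreen_update_notMem_edgeSet he, sub_self]
    refine (Finset.sum_eq_zero fun ab hab => if_neg fun h => he ?_).symm
    rw [← (Finset.mem_filter.mp hab).2]
    exact h.1

theorem sum_ite_reachesGreen_update_sub (γ : ℝ) (e : Sym2 V) (ω : Sym2 V → Bool) (x₀ : V) :
    ((∑ g, if ReachesGreen G (Function.update ω e true) g x₀ then siteWeight γ g else 0) -
        ∑ g, if ReachesGreen G ω g x₀ then siteWeight γ g else 0) =
      ∑ ab : V × V with s(ab.1, ab.2) = e,
        ∑ g, if G.Adj ab.1 ab.2 ∧ IsPivotal G ω g x₀ ab.1 ab.2 then siteWeight γ g else 0 := by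
  rw [← Finset.sum_sub_distrib, Finset.sum_comm]
  exact Finset.sum_congr rfl fun g _ => ite_reachesGreen_update_sub e ω g x₀ _

theorem jointProb_eq_sum_edgeWeight_mul (p γ : ℝ) (S : Set ((Sym2 V → Bool) × (V → Bool))) :
    jointProb p γ S = ∑ ω, edgeWeight p ω * ∑ g, if (ω, g) ∈ S then siteWeight γ g else 0 := by
  simp only [jointProb, Fintype.sum_prod_type, Finset.mul_sum, mul_ite, mul_zero]

theorem ite_adj_jointProb_isPivotal (p γ : ℝ) (x₀ a b : V) :
    (if G.Adj a b then jointProb p γ {c | IsPivotal G c.1 c.2 x₀ a b} else 0) =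
      ∑ ω, edgeWeight p ω *
        ∑ g, if G.Adj a b ∧ IsPivotal G ω g x₀ a b then siteWeight γ g else 0 := by
  rw [jointProb_eq_sum_edgeWeight_mul]
  split_ifs with hab <;> simp [hab]

end Magnetization

theorem magnetization_derivative_formula_general {V : Type*} [Fintype V] [DecidableEq V]
    (G : SimpleGraph V) (p γ : ℝ) (x₀ : V) :
    (1 - p) * deriv (fun q => jointProb q γ {c : (Sym2 V → Bool) × (V → Bool) |
        ∃ y, Conn G c.1 x₀ y ∧ c.2 y = true}) p
      = ∑ x : V, ∑ y : V,
          if G.Adj x y then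
            jointProb p γ {c : (Sym2 V → Bool) × (V → Bool) |
              Conn G c.1 x₀ x ∧ (∀ z, Conn G c.1 x₀ z → c.2 z = false) ∧
              (∃ z, Conn G c.1 y z ∧ c.2 z = true)}
          else 0 := by
  set F : (Sym2 V → Bool) → ℝ :=
    fun ω => ∑ g, if ReachesGreen G ω g x₀ then siteWeight γ g else 0
  -- `edgeWeight` is `bernoulliWeight` on the bond set `Sym2 V`.
  have hM (q : ℝ) : jointProb q γ {c | ReachesGreen G c.1 c.2 x₀} =
      ∑ ω, bernoulliWeight q ω * F ω :=
    jointProb_eq_sum_edgeWeight_mul q γ _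
  calc (1 - p) * deriv (fun q => jointProb q γ {c | ReachesGreen G c.1 c.2 x₀}) p
      = ∑ e, ∑ ω, bernoulliWeight p ω * (F (Function.update ω e true) - F ω) := by
        simp only [hM, russo_formula]
    _ = ∑ e, ∑ ab : V × V with s(ab.1, ab.2) = e, ∑ ω, edgeWeight p ω *
          ∑ g, if G.Adj ab.1 ab.2 ∧ IsPivotal G ω g x₀ ab.1 ab.2 then siteWeight γ g else 0 := by
        refine Finset.sum_congr rfl fun e _ => ?_
        simp only [F, sum_ite_reachesGreen_update_sub, Finset.mul_sum]
        exact Finset.sum_comm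
    _ = _ := by
        rw [Finset.sum_fiberwise, Fintype.sum_prod_type]
        exact Finset.sum_congr rfl fun a _ => Finset.sum_congr rfl fun b _ =>
          (ite_adj_jointProb_isPivotal p γ x₀ a b).symm

/-- **Russo-type derivative formula for the magnetization.**
`(1−p) ∂M/∂p = ∑_{x∼y} P_{p,γ}(x ∈ C(0), C(0) ∩ G = ∅, C(y) ∩ G ≠ ∅)`,
where the sum is over ordered pairs of adjacent vertices and
`M(p,γ) = P_{p,γ}(0 ↔ G)`. -/
theorem magnetization_derivative_formula {V : Type*} [Fintype V] [DecidableEq V]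
    (G : SimpleGraph V) (p γ : ℝ) (hp0 : 0 ≤ p) (hp1 : p ≤ 1)
    (hγ0 : 0 ≤ γ) (hγ1 : γ ≤ 1) (x₀ : V) :
    (1 - p) * deriv (fun q => jointProb q γ {c : (Sym2 V → Bool) × (V → Bool) |
        ∃ y, Conn G c.1 x₀ y ∧ c.2 y = true}) p
      = ∑ x : V, ∑ y : V,
          if G.Adj x y then
            jointProb p γ {c : (Sym2 V → Bool) × (V → Bool) |
              Conn G c.1 x₀ x ∧ (∀ z, Conn G c.1 x₀ z → c.2 z = false) ∧
              (∃ z, Conn G c.1 y z ∧ c.2 z = true)}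
          else 0 :=
  magnetization_derivative_formula_general G p γ x₀

end
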